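/- arXiv:1205.0873 — 5 statements merged into one kernel-verified Lean document; each statement's English description precedes it below -/
import Mathlib

section
/- Every geodesic ptolemaic metric space is distance convex: for every point p ∈ X and every geodesic c : [0,1] → X (i.e. d(c(s),c(t)) = λ|s−t| for all s,t ∈ [0,1] and some λ ≥ 0), the function t ↦ d(p, c(t)) is convex on [0,1]. -/
open Metric Set Filter Topology

/-- A metric space is ptolemaic if all quadruples satisfy the Ptolemy inequality. -/
def Ptolemaic (X : Type*) [MetricSpace X] : Prop :=
  ∀ x y z w : X, dist x y * dist z w ≤ dist x z * dist y w + dist x w * dist y z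

/-- A metric space is geodesic if every pair of points is joined by a geodesic. -/
def GeodesicMetricSpace (X : Type*) [MetricSpace X] : Prop :=
  ∀ x y : X, ∃ c : ℝ → X, c 0 = x ∧ c 1 = y ∧
    ∀ s ∈ Set.Icc (0:ℝ) 1, ∀ t ∈ Set.Icc (0:ℝ) 1,
      dist (c s) (c t) = dist x y * |s - t|

/-!
If `m` lies on a geodesic from `x` to `y`, splitting it in the ratio `b : a` with `a + b = 1`,
then the Ptolemy inequality for the quadruple `p, m, x, y` reads
`d(p,m) d(x,y) ≤ (a d(p,x) + b d(p,y)) d(x,y)`; dividing by `d(x,y)` is exactly convexity of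
`d(p, ·)` along the geodesic.
-/

theorem Ptolemaic.dist_le_of_dist_eq_mul {X : Type*} [MetricSpace X] (hPT : Ptolemaic X)
    (p : X) {x y m : X} {a b : ℝ} (hab : a + b = 1)
    (hxm : dist x m = b * dist x y) (hmy : dist m y = a * dist x y) :
    dist p m ≤ a * dist p x + b * dist p y := by
  rcases eq_or_ne x y with rfl | hxy
  · obtain rfl : x = m := dist_eq_zero.1 (by simpa using hxm)
    rw [← add_mul, hab, one_mul]
  · have hD : 0 < dist x y := dist_pos.2 hxy
    have hPtolemy := hPT p m x y
    rw [hmy, dist_comm m x, hxm] at hPtolemy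
    refine le_of_mul_le_mul_right ?_ hD
    linear_combination hPtolemy

theorem Ptolemaic.convexOn_dist_of_dist_eq_mul_abs {X : Type*} [MetricSpace X]
    (hPT : Ptolemaic X) (p : X) {s : Set ℝ} (hs : Convex ℝ s) {c : ℝ → X} {l : ℝ}
    (hc : ∀ t ∈ s, ∀ u ∈ s, dist (c t) (c u) = l * |t - u|) :
    ConvexOn ℝ s (fun t => dist p (c t)) := by
  refine ⟨hs, fun x hx y hy a b ha hb hab => ?_⟩
  have hm := hs hx hy ha hb hab
  simp only [smul_eq_mul] at hm ⊢
  refine hPT.dist_le_of_dist_eq_mul p hab ?_ ?_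
  · rw [hc x hx _ hm, hc x hx y hy, show x - (a * x + b * y) = b * (x - y) by
      linear_combination -x * hab, abs_mul, abs_of_nonneg hb]
    ring
  · rw [hc _ hm y hy, hc x hx y hy, show a * x + b * y - y = a * (x - y) by
      linear_combination y * hab, abs_mul, abs_of_nonneg ha]
    ring

theorem geodesic_ptolemaic_distance_convex_general (X : Type*) [MetricSpace X]
    (hPT : Ptolemaic X)
    (p : X) (c : ℝ → X) (l : ℝ)
    (hc : ∀ s ∈ Set.Icc (0:ℝ) 1, ∀ t ∈ Set.Icc (0:ℝ) 1,
      dist (c s) (c t) = l * |s - t|) :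
    ConvexOn ℝ (Set.Icc (0:ℝ) 1) (fun t => dist p (c t)) :=
  hPT.convexOn_dist_of_dist_eq_mul_abs p (convex_Icc 0 1) hc

/-- **A geodesic PT space is distance convex.** -/
theorem geodesic_ptolemaic_distance_convex (X : Type*) [MetricSpace X]
    (hPT : Ptolemaic X) (hgeo : GeodesicMetricSpace X)
    (p : X) (c : ℝ → X) (l : ℝ) (hl : 0 ≤ l)
    (hc : ∀ s ∈ Set.Icc (0:ℝ) 1, ∀ t ∈ Set.Icc (0:ℝ) 1,
      dist (c s) (c t) = l * |s - t|) :
    ConvexOn ℝ (Set.Icc (0:ℝ) 1) (fun t => dist p (c t)) :=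
  geodesic_ptolemaic_distance_convex_general X hPT p c l hc
end

section
/- Let X be a distance convex geodesic metric space. Then every local geodesic in X is globally minimizing: if c : [a,b] → X and there is λ ≥ 0 such that every t ∈ [a,b] has a neighborhood I' ⊆ [a,b] on which d(c(s),c(s')) = λ|s−s'| for all s,s' ∈ I', then d(c(s),c(s')) = λ|s−s'| for all s,s' ∈ [a,b]. -/
open Metric Set Filter Topology

/-- A metric space is distance convex if the distance to any fixed point is
convex along every geodesic. -/
def DistanceConvex (X : Type*) [MetricSpace X] : Prop :=
  ∀ p : X, ∀ c : ℝ → X, ∀ l : ℝ, 0 ≤ l →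
    (∀ s ∈ Set.Icc (0:ℝ) 1, ∀ t ∈ Set.Icc (0:ℝ) 1,
      dist (c s) (c t) = l * |s - t|) →
    ConvexOn ℝ (Set.Icc (0:ℝ) 1) (fun t => dist p (c t))

/-! Fix a base point `c a` and put `f t = dist (c a) (c t)`. Gluing the local geodesic pieces by
real induction gives `f t ≤ l * (t - a)`. For the reverse inequality, induct again: if
`f x = l * (x - a)` with `x > a`, then on a short geodesic segment `[α, β]` around `x` the function
`f` is convex by distance convexity, lies below the line `t ↦ l * (t - a)` at `α` and meets it at
`x`, so it stays above the line on `[x, β]`. -/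

def IsGeodesicOn {X : Type*} [PseudoMetricSpace X] (c : ℝ → X) (l : ℝ) (s : Set ℝ) : Prop :=
  ∀ u ∈ s, ∀ v ∈ s, dist (c u) (c v) = l * |u - v|

def IsLocalGeodesicOn {X : Type*} [PseudoMetricSpace X] (c : ℝ → X) (l : ℝ) (s : Set ℝ) : Prop :=
  ∀ t ∈ s, ∃ ε > 0, IsGeodesicOn c l (s ∩ Ioo (t - ε) (t + ε))

theorem Icc_induction {α : Type*} [ConditionallyCompleteLinearOrder α] [TopologicalSpace α]
    [OrderTopology α] [DenselyOrdered α] {a b : α} {P : α → Prop}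
    (hP : IsClosed {t ∈ Icc a b | P t}) (ha : P a)
    (hstep : ∀ x ∈ Ico a b, P x → ∀ᶠ t in 𝓝[>] x, t ∈ Icc a b → P t) :
    ∀ t ∈ Icc a b, P t := by
  have hsub : Icc a b ⊆ {t | t ∈ Icc a b → P t} := by
    refine IsClosed.Icc_subset_of_forall_mem_nhdsWithin ?_ (fun _ => ha) fun x hx => ?_
    · convert hP using 1
      ext t
      exact ⟨fun ⟨hP, ht⟩ => ⟨ht, hP ht⟩, fun ⟨ht, hP⟩ => ⟨fun _ => hP, ht⟩⟩
    · exact hstep x hx.2 (hx.1 (Ico_subset_Icc_self hx.2))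
  exact fun t ht => hsub ht ht

theorem ConvexOn.mul_sub_le_of_crossing {s : Set ℝ} {f : ℝ → ℝ} {l a x y z : ℝ}
    (hf : ConvexOn ℝ s f) (hx : x ∈ s) (hz : z ∈ s) (hxy : x < y) (hyz : y ≤ z)
    (hfx : f x ≤ l * (x - a)) (hfy : l * (y - a) ≤ f y) : l * (z - a) ≤ f z := by
  have hline : ConcaveOn ℝ s (fun t => l * (t - a)) :=
    ⟨hf.1, fun u _ v _ μ ν _ _ hμν =>
      le_of_eq (by simp only [smul_eq_mul]; linear_combination (-l * a) * hμν)⟩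
  have := (hf.sub hline).le_right_of_left_le'' hx hz hxy hyz
    (by simp only [Pi.sub_apply]; linarith)
  simp only [Pi.sub_apply] at this
  linarith

section

variable {X : Type*} [PseudoMetricSpace X] {c : ℝ → X} {l a b : ℝ} {s t : Set ℝ}

theorem IsGeodesicOn.mono (h : IsGeodesicOn c l s) (hts : t ⊆ s) : IsGeodesicOn c l t :=
  fun u hu v hv => h u (hts hu) v (hts hv)

theorem IsGeodesicOn.lipschitzOnWith (h : IsGeodesicOn c l s) : LipschitzOnWith l.toNNReal c s :=
  LipschitzOnWith.of_dist_le' fun u hu v hv => (h u hu v hv).le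

theorem IsLocalGeodesicOn.mono (h : IsLocalGeodesicOn c l s) (hts : t ⊆ s) :
    IsLocalGeodesicOn c l t := fun x hx =>
  let ⟨ε, hε, hg⟩ := h x (hts hx)
  ⟨ε, hε, hg.mono (inter_subset_inter_left _ hts)⟩

theorem IsLocalGeodesicOn.continuousOn (h : IsLocalGeodesicOn c l s) : ContinuousOn c s := by
  intro x hx
  obtain ⟨ε, hε, hg⟩ := h x hx
  have hxε : x ∈ Ioo (x - ε) (x + ε) := ⟨by linarith, by linarith⟩
  exact (continuousWithinAt_inter (Ioo_mem_nhds hxε.1 hxε.2)).mp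
    (hg.lipschitzOnWith.continuousOn x ⟨hx, hxε⟩)

theorem IsLocalGeodesicOn.eventually_dist_eq (h : IsLocalGeodesicOn c l s) {x : ℝ} (hx : x ∈ s) :
    ∀ᶠ t in 𝓝[>] x, t ∈ s → dist (c x) (c t) = l * (t - x) := by
  obtain ⟨ε, hε, hg⟩ := h x hx
  filter_upwards [Ioo_mem_nhdsGT (show x < x + ε by linarith)] with t ht hts
  rw [hg x ⟨hx, by linarith, by linarith⟩ t ⟨hts, by linarith [ht.1], ht.2⟩, abs_sub_comm,
    abs_of_pos (sub_pos.2 ht.1)]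

theorem IsLocalGeodesicOn.dist_le (h : IsLocalGeodesicOn c l (Icc a b)) :
    ∀ t ∈ Icc a b, dist (c a) (c t) ≤ l * (t - a) := by
  have hc := h.continuousOn
  refine Icc_induction (isClosed_Icc.isClosed_le (by fun_prop) (by fun_prop)) (by simp)
    fun x hx hPx => ?_
  filter_upwards [h.eventually_dist_eq (Ico_subset_Icc_self hx)] with t hxt htI
  calc dist (c a) (c t) ≤ dist (c a) (c x) + dist (c x) (c t) := dist_triangle _ _ _
    _ ≤ l * (x - a) + l * (t - x) := by rw [hxt htI]; linarith
    _ = l * (t - a) := by ring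

end

section

variable {X : Type*} [MetricSpace X] {c : ℝ → X} {l a b : ℝ}

theorem DistanceConvex.convexOn_dist (hX : DistanceConvex X) (hl : 0 ≤ l)
    (hc : IsGeodesicOn c l (Icc a b)) (p : X) : ConvexOn ℝ (Icc a b) (fun t => dist p (c t)) := by
  rcases le_or_gt b a with hba | hab
  · refine ⟨convex_Icc a b, fun x hx y hy μ ν _ _ hμν => ?_⟩
    obtain rfl : x = y := subsingleton_Icc_of_ge hba hx hy
    rw [← add_smul, hμν, one_smul, ← add_smul, hμν, one_smul]
  have hpos : 0 < b - a := sub_pos.2 hab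
  have hmem : ∀ u ∈ Icc (0 : ℝ) 1, AffineMap.lineMap a b u ∈ Icc a b := fun u hu =>
    segment_eq_Icc hab.le ▸ lineMap_mem_segment (𝕜 := ℝ) a b hu
  have hunit := hX p (fun u => c (AffineMap.lineMap a b u)) (l * (b - a))
    (mul_nonneg hl hpos.le) fun u hu v hv => by
      rw [hc _ (hmem u hu) _ (hmem v hv), AffineMap.lineMap_apply_ring',
        AffineMap.lineMap_apply_ring', add_sub_add_right_eq_sub, ← sub_mul, abs_mul,
        abs_of_pos hpos]
      ring
  set φ : ℝ →ᵃ[ℝ] ℝ := AffineMap.lineMap (-a / (b - a)) ((1 - a) / (b - a))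
  have hφ : ∀ t, φ t = (t - a) / (b - a) := fun t => by
    rw [AffineMap.lineMap_apply_ring']
    field_simp
    ring
  have hpre : φ ⁻¹' Icc 0 1 = Icc a b := by
    ext t
    rw [mem_preimage, hφ, mem_Icc, mem_Icc, le_div_iff₀ hpos, div_le_one hpos, zero_mul,
      sub_nonneg, sub_le_sub_iff_right]
  refine (hpre ▸ hunit.comp_affineMap φ).congr fun t _ => ?_
  simp only [Function.comp_apply, hφ, AffineMap.lineMap_apply_ring']
  congr 2
  field_simp
  ring

theorem IsLocalGeodesicOn.dist_eq (hX : DistanceConvex X) (hl : 0 ≤ l)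
    (h : IsLocalGeodesicOn c l (Icc a b)) : ∀ t ∈ Icc a b, dist (c a) (c t) = l * (t - a) := by
  have hc := h.continuousOn
  refine Icc_induction (isClosed_Icc.isClosed_eq (by fun_prop) (by fun_prop)) (by simp)
    fun x hx hPx => ?_
  rcases hx.1.eq_or_lt with rfl | hax
  · exact h.eventually_dist_eq (Ico_subset_Icc_self hx)
  obtain ⟨ε, hε, hg⟩ := h x (Ico_subset_Icc_self hx)
  set α := max a (x - ε / 2)
  set β := min b (x + ε / 2)
  have hαx : α < x := max_lt hax (by linarith)
  have hxβ : x < β := lt_min hx.2 (by linarith)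
  have hαβ : Icc α β ⊆ Icc a b ∩ Ioo (x - ε) (x + ε) := fun t ht =>
    ⟨⟨(le_max_left _ _).trans ht.1, ht.2.trans (min_le_left _ _)⟩,
      (show x - ε < α by linarith [le_max_right a (x - ε / 2)]).trans_le ht.1,
      ht.2.trans_lt (show β < x + ε by linarith [min_le_right b (x + ε / 2)])⟩
  have hconv := hX.convexOn_dist hl (hg.mono hαβ) (c a)
  filter_upwards [Ioo_mem_nhdsGT hxβ] with t ht htI
  refine le_antisymm (h.dist_le t htI) (hconv.mul_sub_le_of_crossing ?_ ?_ hαx ht.1.le ?_ hPx.ge)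
  · exact ⟨le_rfl, (hαx.trans hxβ).le⟩
  · exact ⟨(hαx.trans ht.1).le, ht.2.le⟩
  · exact h.dist_le α (hαβ ⟨le_rfl, (hαx.trans hxβ).le⟩).1

theorem IsLocalGeodesicOn.isGeodesicOn_Icc (hX : DistanceConvex X) (hl : 0 ≤ l)
    (h : IsLocalGeodesicOn c l (Icc a b)) : IsGeodesicOn c l (Icc a b) := by
  intro s hs s' hs'
  wlog hss' : s ≤ s' generalizing s s'
  · rw [dist_comm, abs_sub_comm]
    exact this s' hs' s hs (le_of_not_ge hss')
  rw [abs_sub_comm, abs_of_nonneg (sub_nonneg.2 hss')]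
  exact (h.mono (Icc_subset_Icc_left hs.1)).dist_eq hX hl s' ⟨hss', hs'.2⟩

end

theorem local_geodesic_globally_minimizing_general (X : Type*) [MetricSpace X]
    (hdc : DistanceConvex X)
    (a b : ℝ) (c : ℝ → X) (l : ℝ) (hl : 0 ≤ l)
    (hloc : ∀ t ∈ Set.Icc a b, ∃ ε > (0:ℝ),
      ∀ s ∈ Set.Icc a b ∩ Set.Ioo (t - ε) (t + ε),
      ∀ s' ∈ Set.Icc a b ∩ Set.Ioo (t - ε) (t + ε),
        dist (c s) (c s') = l * |s - s'|) :
    ∀ s ∈ Set.Icc a b, ∀ s' ∈ Set.Icc a b, dist (c s) (c s') = l * |s - s'| :=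
  IsLocalGeodesicOn.isGeodesicOn_Icc hdc hl hloc

/-- **In a distance convex geodesic space every local geodesic is globally
minimizing.** -/
theorem local_geodesic_globally_minimizing (X : Type*) [MetricSpace X]
    (hdc : DistanceConvex X) (hgeo : GeodesicMetricSpace X)
    (a b : ℝ) (hab : a ≤ b) (c : ℝ → X) (l : ℝ) (hl : 0 ≤ l)
    (hloc : ∀ t ∈ Set.Icc a b, ∃ ε > (0:ℝ),
      ∀ s ∈ Set.Icc a b ∩ Set.Ioo (t - ε) (t + ε),
      ∀ s' ∈ Set.Icc a b ∩ Set.Ioo (t - ε) (t + ε),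
        dist (c s) (c s') = l * |s - s'|) :
    ∀ s ∈ Set.Icc a b, ∀ s' ∈ Set.Icc a b, dist (c s) (c s') = l * |s - s'| :=
  local_geodesic_globally_minimizing_general X hdc a b c l hl hloc
end

section
/- Let X be a ptolemaic metric space and let c₁, c₂ : [0,∞) → X be asymptotic geodesic rays with Busemann functions b₁ = b_{c₁} and b₂ = b_{c₂}. Then the function b₁ − b₂ is constant on X. -/
open Metric Set Filter Topology

/-- A unit-speed geodesic ray: an isometric embedding of `[0,∞)`. -/
def IsGeodesicRay {X : Type*} [MetricSpace X] (c : ℝ → X) : Prop :=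
  ∀ s t : ℝ, 0 ≤ s → 0 ≤ t → dist (c s) (c t) = |s - t|

/-- Two rays are asymptotic if their distance is sublinear. -/
def AsymptoticRays {X : Type*} [MetricSpace X] (c₁ c₂ : ℝ → X) : Prop :=
  Filter.Tendsto (fun t => dist (c₁ t) (c₂ t) / t) Filter.atTop (nhds 0)

/-- `b` is the Busemann function of the ray `c`. -/
def IsBusemannOf {X : Type*} [MetricSpace X] (c : ℝ → X) (b : X → ℝ) : Prop :=
  ∀ x : X, Filter.Tendsto (fun t => dist x (c t) - t) Filter.atTop (nhds (b x))

/-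
Apply the Ptolemy inequality to `x`, `c₁ t`, `y`, `c₂ t`, divide by `t` and subtract `t`:
the left side tends to `b₁ x + b₂ y`, the right side to `b₂ x + b₁ y`, because
`d(c₁ t, c₂ t) / t → 0`. So `b₁ x - b₂ x ≤ b₁ y - b₂ y` for all `x`, `y`.
-/

lemma tendsto_mul_div_sub_self {u v : ℝ → ℝ} {α β : ℝ}
    (hu : Tendsto (fun t => u t - t) atTop (𝓝 α))
    (hv : Tendsto (fun t => v t - t) atTop (𝓝 β)) :
    Tendsto (fun t => u t * v t / t - t) atTop (𝓝 (α + β)) := by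
  have hlim : Tendsto (fun t => (u t - t) + (v t - t) + (u t - t) * (v t - t) / t)
      atTop (𝓝 (α + β)) := by
    simpa using (hu.add hv).add ((hu.mul hv).div_atTop tendsto_id)
  refine hlim.congr' ?_
  filter_upwards [eventually_ne_atTop (0 : ℝ)] with t ht
  field_simp
  ring

lemma Ptolemaic.busemann_add_le_of_asymptotic {X : Type*} [MetricSpace X]
    (hPT : Ptolemaic X) {c₁ c₂ : ℝ → X} (hasym : AsymptoticRays c₁ c₂)
    {b₁ b₂ : X → ℝ} (hb₁ : IsBusemannOf c₁ b₁) (hb₂ : IsBusemannOf c₂ b₂) (x y : X) :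
    b₁ x + b₂ y ≤ b₂ x + b₁ y := by
  have hlhs := tendsto_mul_div_sub_self (hb₁ x) (hb₂ y)
  have hrhs : Tendsto (fun t => dist x y * (dist (c₁ t) (c₂ t) / t) +
      (dist x (c₂ t) * dist y (c₁ t) / t - t)) atTop (𝓝 (b₂ x + b₁ y)) := by
    simpa using (hasym.const_mul (dist x y)).add (tendsto_mul_div_sub_self (hb₂ x) (hb₁ y))
  refine le_of_tendsto_of_tendsto hlhs hrhs ?_
  filter_upwards [eventually_gt_atTop (0 : ℝ)] with t ht
  have hptolemy := hPT x (c₁ t) y (c₂ t)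
  rw [dist_comm (c₁ t) y] at hptolemy
  rw [mul_div_assoc', ← add_sub_assoc, ← add_div]
  gcongr

theorem busemann_of_asymptotic_rays_differ_by_constant_general
    (X : Type*) [MetricSpace X] (hPT : Ptolemaic X)
    (c₁ c₂ : ℝ → X)
    (hasym : AsymptoticRays c₁ c₂)
    (b₁ b₂ : X → ℝ) (hb₁ : IsBusemannOf c₁ b₁) (hb₂ : IsBusemannOf c₂ b₂) :
    ∃ C : ℝ, ∀ x : X, b₁ x - b₂ x = C := by
  rcases isEmpty_or_nonempty X with hX | ⟨⟨x₀⟩⟩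
  · exact ⟨0, hX.elim⟩
  refine ⟨b₁ x₀ - b₂ x₀, fun x => ?_⟩
  linarith [hPT.busemann_add_le_of_asymptotic hasym hb₁ hb₂ x x₀,
    hPT.busemann_add_le_of_asymptotic hasym hb₁ hb₂ x₀ x]

/-- **Asymptotic rays in a PT space have Busemann functions differing by a
constant.** -/
theorem busemann_of_asymptotic_rays_differ_by_constant
    (X : Type*) [MetricSpace X] (hPT : Ptolemaic X)
    (c₁ c₂ : ℝ → X) (h₁ : IsGeodesicRay c₁) (h₂ : IsGeodesicRay c₂)
    (hasym : AsymptoticRays c₁ c₂)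
    (b₁ b₂ : X → ℝ) (hb₁ : IsBusemannOf c₁ b₁) (hb₂ : IsBusemannOf c₂ b₂) :
    ∃ C : ℝ, ∀ x : X, b₁ x - b₂ x = C :=
  busemann_of_asymptotic_rays_differ_by_constant_general X hPT c₁ c₂ hasym b₁ b₂ hb₁ hb₂
end

section
/- Let X be a ptolemaic metric space and let c₁, c₂ : ℝ → X be parallel geodesic lines with Busemann functions b₁^± and b₂^± of the corresponding forward and backward rays. Then b₁⁺ + b₁⁻ = b₂⁺ + b₂⁻ as functions on X. -/
/-
The difference `b₂ - b₁` of the forward Busemann functions of two forward-parallel lines is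
constant. Indeed `τ ↦ b₂ (c₁ τ) + τ` and `τ ↦ b₁ (c₂ τ) + τ` are monotone, and Ptolemy's
inequality for `c₁ τ, c₂ t, c₂ τ, c₁ t` with `t → ∞` shows that their sum is nonpositive
(this is where sublinearity of `dist (c₁ t) (c₂ t)` enters); squeezing `b₂ - b₁` between the
suprema of the two functions forces it to be constant. So `b₂⁺ = b₁⁺ + A` and `b₂⁻ = b₁⁻ + A'`.
Finally `b⁺ + b⁻ ≥ 0` with equality at `c 0` for either line, which forces `A + A' = 0`.
-/

open Metric Set Filter Topology

/-- A unit-speed geodesic line: an isometric embedding of ℝ. -/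
def IsGeodesicLine {X : Type*} [MetricSpace X] (c : ℝ → X) : Prop :=
  ∀ s t : ℝ, dist (c s) (c t) = |s - t|

/-- Two lines are parallel if their distance is sublinear in both directions. -/
def ParallelLines {X : Type*} [MetricSpace X] (c₀ c₁ : ℝ → X) : Prop :=
  Filter.Tendsto (fun t => dist (c₀ t) (c₁ t) / |t|) Filter.atTop (nhds 0) ∧
  Filter.Tendsto (fun t => dist (c₀ t) (c₁ t) / |t|) Filter.atBot (nhds 0)

lemma nonpos_of_eventually_mul_le_add {k C : ℝ} {u : ℝ → ℝ}
    (hu : Tendsto (fun t => u t / |t|) atTop (𝓝 0)) (h : ∀ᶠ t in atTop, k * t ≤ u t + C) :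
    k ≤ 0 := by
  have hlim : Tendsto (fun t => k - C / t) atTop (𝓝 k) := by
    simpa using (tendsto_const_nhds (x := k)).sub
      ((tendsto_const_nhds (x := C)).div_atTop tendsto_id)
  refine le_of_tendsto_of_tendsto hlim hu ?_
  filter_upwards [h, eventually_gt_atTop 0] with t ht htpos
  rw [abs_of_pos htpos, le_div_iff₀ htpos, sub_mul, div_mul_cancel₀ _ htpos.ne']
  linarith

section Lines

variable {X : Type*} [MetricSpace X]

namespace IsGeodesicLine

variable {c : ℝ → X}

lemma dist_of_le (hc : IsGeodesicLine c) {s t : ℝ} (h : s ≤ t) : dist (c s) (c t) = t - s := by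
  rw [hc, abs_of_nonpos (sub_nonpos.2 h), neg_sub]

lemma comp_neg (hc : IsGeodesicLine c) : IsGeodesicLine (fun t => c (-t)) := fun s t => by
  rw [hc, neg_sub_neg, abs_sub_comm]

end IsGeodesicLine

lemma ParallelLines.comp_neg {c₁ c₂ : ℝ → X} (h : ParallelLines c₁ c₂) :
    ParallelLines (fun t => c₁ (-t)) (fun t => c₂ (-t)) := by
  constructor
  · simpa [Function.comp_def] using h.2.comp tendsto_neg_atTop_atBot
  · simpa [Function.comp_def] using h.1.comp tendsto_neg_atBot_atTop

namespace IsBusemannOf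

variable {c : ℝ → X} {b : X → ℝ}

lemma le_add_dist (hb : IsBusemannOf c b) (x y : X) : b x ≤ b y + dist x y := by
  refine le_of_tendsto_of_tendsto' (hb x) ((hb y).add_const (dist x y)) fun t => ?_
  linarith [dist_triangle x y (c t)]

lemma le_dist_sub (hb : IsBusemannOf c b) (hc : IsGeodesicLine c) (x : X) (t : ℝ) :
    b x ≤ dist x (c t) - t := by
  refine le_of_tendsto (hb x) ?_
  filter_upwards [eventually_ge_atTop t] with u hu
  linarith [dist_triangle x (c t) (c u), hc.dist_of_le hu]

lemma apply_self (hb : IsBusemannOf c b) (hc : IsGeodesicLine c) (τ : ℝ) : b (c τ) = -τ := by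
  refine tendsto_nhds_unique (hb (c τ)) (tendsto_const_nhds.congr' ?_)
  filter_upwards [eventually_ge_atTop τ] with t ht
  rw [hc.dist_of_le ht]
  ring

lemma monotone_apply_add (hb : IsBusemannOf c b) {c₁ : ℝ → X} (hc₁ : IsGeodesicLine c₁) :
    Monotone fun τ => b (c₁ τ) + τ := fun s t hst => by
  linarith [hb.le_add_dist (c₁ s) (c₁ t), hc₁.dist_of_le hst]

lemma le_add_of_apply_add_le (hb : IsBusemannOf c b) {c' : ℝ → X} {b' : X → ℝ}
    (hb' : IsBusemannOf c' b') {A : ℝ} (hA : ∀ t, b' (c t) + t ≤ A) (x : X) :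
    b' x ≤ b x + A := by
  refine ge_of_tendsto ((hb x).add_const A) (Eventually.of_forall fun t => ?_)
  linarith [hb'.le_add_dist x (c t), hA t]

lemma add_neg_nonneg (hbp : IsBusemannOf c b) {bm : X → ℝ}
    (hbm : IsBusemannOf (fun t => c (-t)) bm) (hc : IsGeodesicLine c) (x : X) :
    0 ≤ b x + bm x := by
  refine ge_of_tendsto ((hbp x).add (hbm x)) ?_
  filter_upwards [eventually_ge_atTop 0] with t ht
  have h2t : dist (c (-t)) (c t) = 2 * t := by rw [hc.dist_of_le (by linarith)]; ring
  linarith [dist_triangle (c (-t)) x (c t), dist_comm x (c (-t))]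

end IsBusemannOf

namespace Ptolemaic

variable {c₁ c₂ : ℝ → X} {b₁ b₂ : X → ℝ}

lemma busemann_cross_add_nonpos (hPT : Ptolemaic X) (h₁ : IsGeodesicLine c₁)
    (h₂ : IsGeodesicLine c₂) (hpar : Tendsto (fun t => dist (c₁ t) (c₂ t) / |t|) atTop (𝓝 0))
    (hb₁ : IsBusemannOf c₁ b₁) (hb₂ : IsBusemannOf c₂ b₂) (τ : ℝ) :
    (b₂ (c₁ τ) + τ) + (b₁ (c₂ τ) + τ) ≤ 0 := by
  set a := b₂ (c₁ τ) + τ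
  set m := b₁ (c₂ τ) + τ
  refine nonpos_of_eventually_mul_le_add (u := fun t => dist (c₁ τ) (c₂ τ) * dist (c₁ t) (c₂ t))
    (C := (a + m) * τ - a * m) (by simpa [mul_div_assoc] using hpar.const_mul _) ?_
  filter_upwards [eventually_ge_atTop τ, eventually_ge_atTop (τ - a), eventually_ge_atTop (τ - m)]
    with t ht hta htm
  have hd₁ : t - τ + a ≤ dist (c₁ τ) (c₂ t) := by linarith [hb₂.le_dist_sub h₂ (c₁ τ) t]
  have hd₂ : t - τ + m ≤ dist (c₂ τ) (c₁ t) := by linarith [hb₁.le_dist_sub h₁ (c₂ τ) t]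
  -- Ptolemy: `(t - τ + a) (t - τ + m) ≤ dist (c₁ τ) (c₂ τ) * dist (c₁ t) (c₂ t) + (t - τ)²`
  have hptolemy := hPT (c₁ τ) (c₂ t) (c₂ τ) (c₁ t)
  rw [h₁.dist_of_le ht, dist_comm (c₂ t), dist_comm (c₂ t), h₂.dist_of_le ht] at hptolemy
  nlinarith [mul_le_mul hd₁ hd₂ (by linarith) dist_nonneg]

lemma exists_busemann_eq_add_const (hPT : Ptolemaic X) (h₁ : IsGeodesicLine c₁)
    (h₂ : IsGeodesicLine c₂) (hpar : Tendsto (fun t => dist (c₁ t) (c₂ t) / |t|) atTop (𝓝 0))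
    (hb₁ : IsBusemannOf c₁ b₁) (hb₂ : IsBusemannOf c₂ b₂) :
    ∃ A : ℝ, ∀ x, b₂ x = b₁ x + A := by
  have hcross (s τ : ℝ) : (b₂ (c₁ s) + s) + (b₁ (c₂ τ) + τ) ≤ 0 := by
    linarith [hb₂.monotone_apply_add h₁ (le_max_left s τ),
      hb₁.monotone_apply_add h₂ (le_max_right s τ),
      hPT.busemann_cross_add_nonpos h₁ h₂ hpar hb₁ hb₂ (max s τ)]
  have hbdd : BddAbove (range fun s => b₂ (c₁ s) + s) :=
    ⟨-(b₁ (c₂ 0) + 0), forall_mem_range.2 fun s => by linarith [hcross s 0]⟩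
  set A := ⨆ s, b₂ (c₁ s) + s
  have hm (τ : ℝ) : b₁ (c₂ τ) + τ ≤ -A :=
    le_neg.2 (ciSup_le fun s => by linarith [hcross s τ])
  refine ⟨A, fun x => le_antisymm (hb₁.le_add_of_apply_add_le hb₂ (le_ciSup hbdd) x) ?_⟩
  linarith [hb₂.le_add_of_apply_add_le hb₁ hm x]

end Ptolemaic

end Lines

/-- **Parallel lines in a PT space have the same sum of forward and backward
Busemann functions.** -/
theorem busemann_sum_eq_of_parallel_lines
    (X : Type*) [MetricSpace X] (hPT : Ptolemaic X)
    (c₁ c₂ : ℝ → X) (h₁ : IsGeodesicLine c₁) (h₂ : IsGeodesicLine c₂)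
    (hpar : ParallelLines c₁ c₂)
    (b₁p b₁m b₂p b₂m : X → ℝ)
    (hb₁p : IsBusemannOf (fun t => c₁ t) b₁p)
    (hb₁m : IsBusemannOf (fun t => c₁ (-t)) b₁m)
    (hb₂p : IsBusemannOf (fun t => c₂ t) b₂p)
    (hb₂m : IsBusemannOf (fun t => c₂ (-t)) b₂m) :
    ∀ x : X, b₁p x + b₁m x = b₂p x + b₂m x := by
  obtain ⟨A, hA⟩ := hPT.exists_busemann_eq_add_const h₁ h₂ hpar.1 hb₁p hb₂p
  obtain ⟨A', hA'⟩ :=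
    hPT.exists_busemann_eq_add_const h₁.comp_neg h₂.comp_neg hpar.comp_neg.1 hb₁m hb₂m
  have hz₁ : b₁m (c₁ 0) = 0 := by simpa using hb₁m.apply_self h₁.comp_neg 0
  have hz₂ : b₂m (c₂ 0) = 0 := by simpa using hb₂m.apply_self h₂.comp_neg 0
  have hsum_nonneg : 0 ≤ A + A' := by
    linarith [hb₂p.add_neg_nonneg hb₂m h₂ (c₁ 0), hA (c₁ 0), hA' (c₁ 0), hb₁p.apply_self h₁ 0]
  have hsum_nonpos : A + A' ≤ 0 := by
    linarith [hb₁p.add_neg_nonneg hb₁m h₁ (c₂ 0), hA (c₂ 0), hA' (c₂ 0), hb₂p.apply_self h₂ 0]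
  intro x
  linarith [hA x, hA' x]
end

section
/- Let X be a ptolemaic metric space and let c, c' : ℝ → X be two unit-speed geodesic lines such that c(t) ≠ c'(t) for every t, and such that they are mutually nearest along matching parameters: d(c(t), c'(t')) ≥ d(c(t), c'(t)) and d(c'(t), c(t')) ≥ d(c'(t), c(t)) for all t, t' ∈ ℝ. Then the function μ(t) = d(c(t), c'(t)) is constant on ℝ. -/
/-!
Write `μ t = d(c t, c' t)`. Ptolemy's inequality for the quadrilateral `c a, c' b, c' a, c b`
bounds the product of its diagonals by `μ a * μ b + (a - b)²`, while mutual nearness bounds that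
product from below by `max (μ a) (μ b)²`. Hence `μ a * |μ a - μ b| ≤ (a - b)²`; as `μ > 0`, the
function `μ` has derivative zero everywhere and is therefore constant.
-/

open Metric Set Filter Topology

section QuadraticBound

variable {𝕜 F : Type*} [RCLike 𝕜] [NormedAddCommGroup F] [NormedSpace 𝕜 F] {f : 𝕜 → F}

theorem hasDerivAt_zero_of_norm_sub_le_mul_sq {x : 𝕜} (C : ℝ)
    (h : ∀ y, ‖f y - f x‖ ≤ C * ‖y - x‖ ^ 2) : HasDerivAt f 0 x := by
  refine .of_isLittleO ?_
  simp only [smul_zero, sub_zero]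
  exact (Asymptotics.IsBigO.of_bound C (Eventually.of_forall fun y => by
    simpa using h y)).trans_isLittleO (Asymptotics.isLittleO_pow_sub_sub x one_lt_two)

theorem is_const_of_norm_sub_le_mul_sq (h : ∀ x, ∃ C, ∀ y, ‖f y - f x‖ ≤ C * ‖y - x‖ ^ 2)
    (x y : 𝕜) : f x = f y := by
  choose C hC using h
  have hderiv (z : 𝕜) : HasDerivAt f 0 z := hasDerivAt_zero_of_norm_sub_le_mul_sq (C z) (hC z)
  exact is_const_of_deriv_eq_zero (fun z => (hderiv z).differentiableAt)
    (fun z => (hderiv z).deriv) x y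

end QuadraticBound

theorem mul_abs_sub_le_of_max_sq_le {x y e : ℝ} (h : max x y ^ 2 ≤ x * y + e) :
    x * |x - y| ≤ e := by
  rcases le_total y x with hyx | hxy
  · rw [max_eq_left hyx] at h
    rw [abs_of_nonneg (sub_nonneg.2 hyx)]
    nlinarith
  · rw [max_eq_right hxy] at h
    rw [abs_of_nonpos (sub_nonpos.2 hxy)]
    nlinarith

section GeodesicLines

variable {X : Type*} [MetricSpace X] {c c' : ℝ → X}

theorem Ptolemaic.dist_mul_dist_le_of_isGeodesicLine (hPT : Ptolemaic X)
    (hc : IsGeodesicLine c) (hc' : IsGeodesicLine c') (a b : ℝ) :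
    dist (c a) (c' b) * dist (c' a) (c b) ≤
      dist (c a) (c' a) * dist (c b) (c' b) + (a - b) ^ 2 := by
  have hP := hPT (c a) (c' b) (c' a) (c b)
  rwa [hc, hc', abs_sub_comm b a, ← abs_mul, abs_mul_self, ← sq, dist_comm (c' b) (c b)] at hP

theorem max_dist_sq_le_of_mutually_nearest
    (hmin : ∀ t t' : ℝ, dist (c t) (c' t) ≤ dist (c t) (c' t'))
    (hmin' : ∀ t t' : ℝ, dist (c' t) (c t) ≤ dist (c' t) (c t')) (a b : ℝ) :
    max (dist (c a) (c' a)) (dist (c b) (c' b)) ^ 2 ≤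
      dist (c a) (c' b) * dist (c' a) (c b) := by
  have ha₁ := hmin a b
  have ha₂ := hmin' a b
  have hb₁ := hmin b a
  have hb₂ := hmin' b a
  simp only [dist_comm (c' _) (c _)] at ha₂ hb₂
  rw [sq]
  apply mul_le_mul _ _ (le_max_of_le_left dist_nonneg) dist_nonneg
  · exact max_le ha₁ hb₂
  · exact max_le (ha₂.trans_eq (dist_comm _ _)) (hb₁.trans_eq (dist_comm _ _))

end GeodesicLines

/-- **Two disjoint mutually nearest geodesic lines in a PT space are
equidistant along matching parameters.** -/
theorem mutually_nearest_lines_equidistant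
    (X : Type*) [MetricSpace X] (hPT : Ptolemaic X)
    (c c' : ℝ → X) (hc : IsGeodesicLine c) (hc' : IsGeodesicLine c')
    (hne : ∀ t : ℝ, c t ≠ c' t)
    (hmin : ∀ t t' : ℝ, dist (c t) (c' t) ≤ dist (c t) (c' t'))
    (hmin' : ∀ t t' : ℝ, dist (c' t) (c t) ≤ dist (c' t) (c t')) :
    ∀ t t' : ℝ, dist (c t) (c' t) = dist (c t') (c' t') := by
  set μ : ℝ → ℝ := fun s => dist (c s) (c' s)
  have hkey (a b : ℝ) : μ a * |μ a - μ b| ≤ (a - b) ^ 2 :=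
    mul_abs_sub_le_of_max_sq_le
      ((max_dist_sq_le_of_mutually_nearest hmin hmin' a b).trans
        (hPT.dist_mul_dist_le_of_isGeodesicLine hc hc' a b))
  refine is_const_of_norm_sub_le_mul_sq fun a => ⟨(μ a)⁻¹, fun b => ?_⟩
  have hpos : 0 < μ a := dist_pos.2 (hne a)
  rw [Real.norm_eq_abs, Real.norm_eq_abs, sq_abs, abs_sub_comm, sub_sq_comm, inv_mul_eq_div,
    le_div_iff₀' hpos]
  exact hkey a b
end
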